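/- Let c > 0, Δt > 0, κ(t) = min(2t/Δt, 1), and let v ∈ L²(ℝ_{≥0}) satisfy v(s) = 0 for s ≥ Δt/2. Then for all t ≥ 0 and a > 0, ∫₀^a |∫₀^{t−ω/c} e^{−c ∫₀^{t−ω/c−s} κ(τ)dτ} v(s) ds|² dω ≤ (a/c) e^{2(a + cΔt)} e^{−2ct} ∫₀^{cΔt/2} |v(s/c)|²/c ds · c, i.e. the convolution term J_a(t) obeys J_a(t) ≤ (a/c) e^{2(a+cΔt)} e^{−2ct} ‖v‖²_{L²(0,Δt/2)}. -/

import Mathlib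

/-!
Fix `ω` and put `T = t - ω / c`. As `v` vanishes outside `[0, Δt/2)`, the inner integral only
sees `s ∈ (0, min T (Δt/2)]`, and there the ramp bound `∫₀ˣ κ ≥ x - Δt/4` gives
`exp (-c ∫₀^{T-s} κ) ≤ exp (ω + 3cΔt/4 - ct)`. Cauchy–Schwarz on an interval of length at most
`Δt/2` then bounds the square of the inner integral by `exp (2a + 3cΔt/2 - 2ct) (Δt/2) ‖v‖²`,
and `x ≤ exp x` at `x = cΔt/2` trades the factor `Δt/2` for `exp (cΔt/2) / c`.
-/

open MeasureTheory Set
open scoped Interval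

theorem sq_integral_le_measureReal_univ_mul_integral_sq {α : Type*} [MeasurableSpace α]
    {μ : Measure α} [IsFiniteMeasure μ] {f : α → ℝ} (hf : MemLp f 2 μ) :
    (∫ x, f x ∂μ) ^ 2 ≤ μ.real univ * ∫ x, f x ^ 2 ∂μ := by
  set m := μ.real univ
  set I := ∫ x, f x ∂μ
  rcases (measureReal_nonneg : 0 ≤ m).eq_or_lt with hm | hm
  · have hμ : μ = 0 := by
      simpa [m, measureReal_def, ENNReal.toReal_eq_zero_iff] using hm.symm
    simp [I, hμ]
  have hf1 : Integrable f μ := hf.integrable one_le_two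
  have hf2 : Integrable (fun x => f x ^ 2) μ := hf.integrable_sq
  have hvar : ∫ x, (m * f x - I) ^ 2 ∂μ = m * (m * ∫ x, f x ^ 2 ∂μ - I ^ 2) := by
    have h : ∀ x, (m * f x - I) ^ 2 = m ^ 2 * f x ^ 2 - 2 * m * I * f x + I ^ 2 := fun x => by
      ring
    simp_rw [h]
    rw [integral_add, integral_sub, integral_const_mul, integral_const_mul, integral_const]
    · simp only [smul_eq_mul, m, I]; ring
    all_goals fun_prop
  have h0 : 0 ≤ m * (m * ∫ x, f x ^ 2 ∂μ - I ^ 2) :=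
    hvar ▸ integral_nonneg fun x => sq_nonneg _
  nlinarith [(mul_nonneg_iff_of_pos_left hm).1 h0]

theorem sq_integral_mul_le_of_abs_le {α : Type*} [MeasurableSpace α]
    {μ : Measure α} [IsFiniteMeasure μ] {g v : α → ℝ} {M : ℝ}
    (hg : AEStronglyMeasurable g μ) (hgM : ∀ᵐ x ∂μ, |g x| ≤ M) (hv : MemLp v 2 μ) :
    (∫ x, g x * v x ∂μ) ^ 2 ≤ M ^ 2 * μ.real univ * ∫ x, v x ^ 2 ∂μ := by
  have hgv : MemLp (fun x => g x * v x) 2 μ := by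
    refine (hv.const_mul M).of_le (hg.mul hv.1) ?_
    filter_upwards [hgM] with x hx
    simp only [norm_mul, Real.norm_eq_abs]
    exact mul_le_mul_of_nonneg_right (hx.trans (le_abs_self M)) (abs_nonneg _)
  calc (∫ x, g x * v x ∂μ) ^ 2 ≤ μ.real univ * ∫ x, (g x * v x) ^ 2 ∂μ :=
        sq_integral_le_measureReal_univ_mul_integral_sq hgv
    _ ≤ μ.real univ * ∫ x, M ^ 2 * v x ^ 2 ∂μ := by
        refine mul_le_mul_of_nonneg_left (integral_mono_ae hgv.integrable_sq
          (hv.integrable_sq.const_mul _) ?_) measureReal_nonneg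
        filter_upwards [hgM] with x hx
        rw [mul_pow]
        exact mul_le_mul_of_nonneg_right (sq_le_sq.2 (hx.trans (le_abs_self M))) (sq_nonneg _)
    _ = M ^ 2 * μ.real univ * ∫ x, v x ^ 2 ∂μ := by
        rw [integral_const_mul]; ring

theorem sq_intervalIntegral_mul_le_of_abs_le {g v : ℝ → ℝ} {b T M : ℝ} (hb : 0 ≤ b)
    (hg : AEStronglyMeasurable g (volume.restrict (Ioc 0 b)))
    (hgM : ∀ s ∈ Ioc 0 (min T b), |g s| ≤ M) (hv : MemLp v 2 (volume.restrict (Ioc 0 b)))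
    (hv_neg : ∀ s < 0, v s = 0) (hv_ge : ∀ s, b ≤ s → v s = 0) :
    (∫ s in 0..T, g s * v s) ^ 2 ≤ M ^ 2 * b * ∫ s in 0..b, v s ^ 2 := by
  rcases le_or_gt T 0 with hT | hT
  · have h0 : ∫ s in 0..T, g s * v s = 0 := by
      rw [intervalIntegral.integral_symm, intervalIntegral.integral_of_le hT,
        integral_Ioc_eq_integral_Ioo,
        setIntegral_eq_zero_of_forall_eq_zero fun s hs => by simp [hv_neg s hs.2], neg_zero]
    rw [h0, sq, zero_mul]
    exact mul_nonneg (by positivity) (intervalIntegral.integral_nonneg hb fun _ _ => sq_nonneg _)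
  set b' := min T b
  have hsub : Ioc 0 b' ⊆ Ioc 0 b := Ioc_subset_Ioc_right (min_le_right _ _)
  have hrestr : volume.restrict (Ioc (0:ℝ) b') ≤ volume.restrict (Ioc 0 b) :=
    Measure.restrict_mono hsub le_rfl
  have htrunc : ∫ s in 0..T, g s * v s = ∫ s in Ioc 0 b', g s * v s := by
    rw [intervalIntegral.integral_of_le hT.le]
    refine setIntegral_eq_of_subset_of_forall_sdiff_eq_zero measurableSet_Ioc
      (Ioc_subset_Ioc_right (min_le_left _ _)) fun s hs => ?_
    have hbs : b < s := by
      by_contra! h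
      exact hs.2 ⟨hs.1.1, le_min hs.1.2 h⟩
    simp [hv_ge s hbs.le]
  have hb' : volume.real (Ioc (0:ℝ) b') ≤ b := by
    rw [Real.volume_real_Ioc]
    exact max_le (by linarith [min_le_right T b]) hb
  calc (∫ s in 0..T, g s * v s) ^ 2
      ≤ M ^ 2 * (volume.restrict (Ioc (0:ℝ) b')).real univ * ∫ s in Ioc 0 b', v s ^ 2 := by
        rw [htrunc]
        exact sq_integral_mul_le_of_abs_le (hg.mono_measure hrestr)
          ((ae_restrict_iff' measurableSet_Ioc).2 (ae_of_all _ hgM)) (hv.mono_measure hrestr)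
    _ ≤ M ^ 2 * b * ∫ s in 0..b, v s ^ 2 := by
        rw [measureReal_restrict_apply_univ, intervalIntegral.integral_of_le hb]
        gcongr ?_ * ?_
        · gcongr
        · exact setIntegral_mono_set hv.integrable_sq (ae_of_all _ fun _ => sq_nonneg _)
            hsub.eventuallyLE

theorem integral_min_div_one_of_le {r x : ℝ} (hx : 0 ≤ x) (hxr : x ≤ r) :
    ∫ τ in 0..x, min (τ / r) 1 = x ^ 2 / (2 * r) := by
  rw [intervalIntegral.integral_congr (g := fun τ => τ / r) fun τ hτ => ?_]
  · rw [intervalIntegral.integral_div, integral_id]; ring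
  · rw [uIcc_of_le hx] at hτ
    rcases hτ with ⟨h0, hτ⟩
    exact min_eq_left (div_le_one_of_le₀ (hτ.trans hxr) (h0.trans (hτ.trans hxr)))

theorem sub_half_le_integral_min_div_one {r x : ℝ} (hr : 0 < r) (hx : 0 ≤ x) :
    x - r / 2 ≤ ∫ τ in 0..x, min (τ / r) 1 := by
  rcases le_or_gt x r with hxr | hrx
  · rw [integral_min_div_one_of_le hx hxr, le_div_iff₀ (by positivity)]
    nlinarith [sq_nonneg (x - r)]
  have hcont : Continuous fun τ : ℝ => min (τ / r) 1 := by fun_prop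
  have htail : ∫ τ in r..x, min (τ / r) 1 = x - r := by
    rw [intervalIntegral.integral_congr (g := fun _ => (1 : ℝ)) fun τ hτ => ?_]
    · simp
    · rw [uIcc_of_le hrx.le] at hτ
      exact min_eq_right ((one_le_div₀ hr).2 hτ.1)
  rw [← intervalIntegral.integral_add_adjacent_intervals (hcont.intervalIntegrable 0 r)
    (hcont.intervalIntegrable r x), integral_min_div_one_of_le hr.le le_rfl, htail]
  field_simp
  linarith

theorem sq_integral_exp_ramp_mul_le {c r T : ℝ} {v : ℝ → ℝ} (hc : 0 ≤ c) (hr : 0 < r)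
    (hv : MemLp v 2 (volume.restrict (Ioc 0 r)))
    (hv_neg : ∀ s < 0, v s = 0) (hv_ge : ∀ s, r ≤ s → v s = 0) :
    (∫ s in 0..T, Real.exp (-c * ∫ τ in 0..(T - s), min (τ / r) 1) * v s) ^ 2
      ≤ Real.exp (c * (3 * r / 2 - T)) ^ 2 * r * ∫ s in 0..r, v s ^ 2 := by
  have hramp : Continuous fun x => ∫ τ in 0..x, min (τ / r) 1 :=
    intervalIntegral.continuous_primitive
      (fun _ _ => (by fun_prop : Continuous fun τ : ℝ => min (τ / r) 1).intervalIntegrable _ _) 0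
  refine sq_intervalIntegral_mul_le_of_abs_le hr.le (by fun_prop : Continuous fun s =>
      Real.exp (-c * ∫ τ in 0..(T - s), min (τ / r) 1)).aestronglyMeasurable
    (fun s hs => ?_) hv hv_neg hv_ge
  have hsT : s ≤ T := hs.2.trans (min_le_left _ _)
  have hsr : s ≤ r := hs.2.trans (min_le_right _ _)
  rw [abs_of_pos (Real.exp_pos _), Real.exp_le_exp]
  linarith [mul_le_mul_of_nonneg_left (sub_half_le_integral_min_div_one hr (sub_nonneg.2 hsT)) hc,
    mul_le_mul_of_nonneg_left hsr hc]

theorem exp_sq_mul_half_le {a c d t : ℝ} (hc : 0 < c) :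
    Real.exp (a + 3 / 4 * (c * d) - c * t) ^ 2 * (d / 2)
      ≤ Real.exp (2 * (a + c * d)) * Real.exp (-2 * c * t) / c := by
  rw [le_div_iff₀ hc]
  calc Real.exp (a + 3 / 4 * (c * d) - c * t) ^ 2 * (d / 2) * c
      = (c * d / 2) * Real.exp (2 * a + 3 / 2 * (c * d) - 2 * c * t) := by
        rw [← Real.exp_nat_mul]; ring_nf
    _ ≤ Real.exp (c * d / 2) * Real.exp (2 * a + 3 / 2 * (c * d) - 2 * c * t) := by
        gcongr; linarith [Real.add_one_le_exp (c * d / 2)]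
    _ = Real.exp (2 * (a + c * d)) * Real.exp (-2 * c * t) := by
        rw [← Real.exp_add, ← Real.exp_add]; ring_nf

/-- the convolution term
`J_a(t) = ∫₀^a |∫₀^{t−ω/c} e^{−c∫₀^{t−ω/c−s}κ} v(s) ds|² dω`
for the ramp gain `κ` and `v` supported in `[0, Δt/2)` satisfies
`J_a(t) ≤ (a/c) e^{2(a+cΔt)} e^{−2ct} ‖v‖²_{L²(0,Δt/2)}`. -/
theorem stmt9 (c Δt : ℝ) (hc : 0 < c) (hΔt : 0 < Δt) (κ : ℝ → ℝ)
    (hκ : ∀ τ, κ τ = min (2 * τ / Δt) 1)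
    (v : ℝ → ℝ) (hm : Measurable v)
    (hsupp : ∀ s, Δt / 2 ≤ s → v s = 0) (hneg : ∀ s, s < 0 → v s = 0)
    (hL2 : Integrable (fun s => (v s) ^ 2) (volume.restrict (Set.Ioo 0 (Δt / 2)))) :
    ∀ t ≥ (0:ℝ), ∀ a > (0:ℝ),
      (∫ ω in (0:ℝ)..a,
          (∫ s in (0:ℝ)..(t - ω / c),
            Real.exp (-c * ∫ τ in (0:ℝ)..(t - ω / c - s), κ τ) * v s) ^ 2)
        ≤ (a / c) * Real.exp (2 * (a + c * Δt)) * Real.exp (-2 * c * t) *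
            ∫ s in (0:ℝ)..(Δt / 2), (v s) ^ 2 := by
  intro t _ a ha
  obtain rfl : κ = fun τ => min (τ / (Δt / 2)) 1 :=
    funext fun τ => by rw [hκ, div_div_eq_mul_div, mul_comm]
  have hv : MemLp v 2 (volume.restrict (Ioc 0 (Δt / 2))) :=
    (memLp_two_iff_integrable_sq hm.aestronglyMeasurable).2
      ((integrableOn_Ioc_iff_integrableOn_Ioo (f := fun s => v s ^ 2)).2 hL2)
  set L := ∫ s in (0:ℝ)..(Δt / 2), (v s) ^ 2
  have hL : 0 ≤ L := intervalIntegral.integral_nonneg (half_pos hΔt).le fun _ _ => sq_nonneg _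
  have hinner : ∀ ω ∈ Ι 0 a,
      ‖(∫ s in (0:ℝ)..(t - ω / c), Real.exp (-c * ∫ τ in (0:ℝ)..(t - ω / c - s),
        min (τ / (Δt / 2)) 1) * v s) ^ 2‖
        ≤ Real.exp (a + 3 / 4 * (c * Δt) - c * t) ^ 2 * (Δt / 2) * L := by
    intro ω hω
    rw [Real.norm_eq_abs, abs_of_nonneg (sq_nonneg _)]
    refine (sq_integral_exp_ramp_mul_le hc.le (half_pos hΔt) hv hneg hsupp).trans ?_
    have hω' : c * (ω / c) = ω := mul_div_cancel₀ ω hc.ne'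
    gcongr
    linarith [(uIoc_of_le ha.le ▸ hω).2]
  calc _ ≤ Real.exp (a + 3 / 4 * (c * Δt) - c * t) ^ 2 * (Δt / 2) * L * |a - 0| :=
        (Real.le_norm_self _).trans (intervalIntegral.norm_integral_le_of_norm_le_const hinner)
    _ ≤ Real.exp (2 * (a + c * Δt)) * Real.exp (-2 * c * t) / c * L * a := by
        rw [sub_zero, abs_of_pos ha]
        gcongr
        exact exp_sq_mul_half_le hc
    _ = _ := by ring
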